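/- For the rectangle E^r = [0,r] × [0, π/r] with r > 0, the interaction energy satisfies ∫_{E^r}∫_{E^r} log(1/|x−y|) dx dy ≤ π²(1 − log(r/2)). -/

import Mathlib

open MeasureTheory

/-- The rectangle `[0,r] × [0, π/r]` in the Euclidean plane. -/
def rect (r : ℝ) : Set (EuclideanSpace ℝ (Fin 2)) :=
  {p | p 0 ∈ Set.Icc 0 r ∧ p 1 ∈ Set.Icc 0 (Real.pi / r)}

/-!
For `x` in the rectangle, `log (1 / |x - y|) ≤ -log |x₀ - y₀|`, so the inner integral is at most
`π / r` times `∫₀ʳ -log |c - t| dt = r - c log c - (r - c) log (r - c)` with `c = x₀`. By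
convexity of `t ↦ t log t` this is at most `r (1 - log (r / 2))`, its value at `c = r / 2`.
Since `|x - y| ≤ r + π / r` on the rectangle, the inner integral is also bounded below, so it is
an integrable function of `x`, and integrating the bound `π (1 - log (r / 2))` over a set of area
`π` gives the claim.
-/

open Real Set

theorem intervalIntegrable_log_abs_sub (c a b : ℝ) :
    IntervalIntegrable (fun t => log |c - t|) volume a b := by
  simpa only [log_abs, sub_sub_cancel] using
    (intervalIntegral.intervalIntegrable_log' (a := c - a) (b := c - b)).comp_sub_left c

-- `log` is even in Mathlib, so no case split on the sign of `c - t` is needed.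
theorem integral_log_abs_sub (c r : ℝ) :
    ∫ t in (0)..r, log |c - t| = c * log c + (r - c) * log (r - c) - r := by
  rw [intervalIntegral.integral_comp_sub_left (fun u => log |u|)]
  simp only [log_abs, integral_log, sub_zero]
  rw [← log_neg_eq_log (c - r), neg_sub]
  ring

theorem add_mul_log_div_two_le {a b : ℝ} (ha : 0 ≤ a) (hb : 0 ≤ b) :
    (a + b) * log ((a + b) / 2) ≤ a * log a + b * log b := by
  have := convexOn_mul_log.2 ha hb (by norm_num : (0:ℝ) ≤ 1 / 2) (by norm_num : (0:ℝ) ≤ 1 / 2)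
    (by norm_num)
  simp only [smul_eq_mul, ← add_div, one_div_mul_eq_div] at this
  linarith

theorem integral_neg_log_abs_sub_le {c r : ℝ} (hc : c ∈ Icc 0 r) :
    ∫ t in (0)..r, -log |c - t| ≤ r * (1 - log (r / 2)) := by
  have := add_mul_log_div_two_le hc.1 (sub_nonneg.2 hc.2)
  rw [add_sub_cancel] at this
  rw [intervalIntegral.integral_neg, integral_log_abs_sub]
  linarith

-- The lower bound `a` is needed: the integral of a non-integrable function is `0`.
theorem setIntegral_le_of_forall_mem_Icc {α : Type*} [MeasurableSpace α] {μ : Measure α}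
    {s : Set α} {f : α → ℝ} {a b : ℝ} (hs : MeasurableSet s) (hμs : μ s ≠ ⊤)
    (hf : AEStronglyMeasurable f (μ.restrict s)) (hab : ∀ x ∈ s, f x ∈ Icc a b) :
    ∫ x in s, f x ∂μ ≤ μ.real s * b := by
  have : IsFiniteMeasure (μ.restrict s) := isFiniteMeasure_restrict.2 hμs
  have hint : IntegrableOn f s μ := Integrable.of_bound hf (max |a| |b|) <|
    (ae_restrict_mem hs).mono fun x hx => abs_le_max_abs_abs (hab x hx).1 (hab x hx).2
  rw [← smul_eq_mul, ← setIntegral_const]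
  exact setIntegral_mono_on hint (integrableOn_const hμs) hs fun x hx => (hab x hx).2

namespace EuclideanSpace

theorem ae_apply_ne {ι : Type*} [Fintype ι] (i : ι) (c : ℝ) :
    ∀ᵐ y : EuclideanSpace ℝ ι, y i ≠ c := by
  simp only [ae_iff, ne_eq, not_not]
  have := (volume_preserving_symm_measurableEquiv_toLp ι).measure_preimage_equiv {f | f i = c}
  rwa [volume_pi, Measure.pi_hyperplane] at this

theorem log_one_div_dist_le_neg_log_abs_sub {ι : Type*} [Fintype ι] {x y : EuclideanSpace ℝ ι}
    {i : ι} (h : x i ≠ y i) : log (1 / dist x y) ≤ -log |x i - y i| := by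
  rw [one_div, log_inv, neg_le_neg_iff]
  exact log_le_log (abs_pos.2 (sub_ne_zero.2 h)) (PiLp.dist_apply_le x y i)

noncomputable def measurableEquivProd : EuclideanSpace ℝ (Fin 2) ≃ᵐ ℝ × ℝ :=
  (MeasurableEquiv.toLp 2 (Fin 2 → ℝ)).symm.trans MeasurableEquiv.finTwoArrow

theorem measurePreserving_measurableEquivProd : MeasurePreserving measurableEquivProd :=
  (volume_preserving_finTwoArrow ℝ).comp (volume_preserving_symm_measurableEquiv_toLp _)

theorem setIntegral_preimage_prod_comp_apply_zero (s t : Set ℝ) (φ : ℝ → ℝ) :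
    ∫ y in measurableEquivProd ⁻¹' (s ×ˢ t), φ (y 0) = volume.real t * ∫ u in s, φ u := by
  refine (measurePreserving_measurableEquivProd.setIntegral_preimage_emb
      measurableEquivProd.measurableEmbedding (fun z : ℝ × ℝ => φ z.1) _).trans ?_
  rw [Measure.volume_eq_prod, ← Measure.prod_restrict, integral_fun_fst,
    measureReal_restrict_apply_univ, smul_eq_mul]

theorem integrableOn_preimage_prod_comp_apply_zero {s t : Set ℝ} {φ : ℝ → ℝ}
    (hφ : IntegrableOn φ s) (ht : volume t ≠ ⊤) :
    IntegrableOn (fun y => φ (y 0)) (measurableEquivProd ⁻¹' (s ×ˢ t)) := by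
  have : IsFiniteMeasure (volume.restrict t) := isFiniteMeasure_restrict.2 ht
  refine (measurePreserving_measurableEquivProd.integrableOn_comp_preimage
    measurableEquivProd.measurableEmbedding (f := fun z : ℝ × ℝ => φ z.1)).2 ?_
  rw [IntegrableOn, Measure.volume_eq_prod, ← Measure.prod_restrict]
  exact hφ.comp_fst (volume.restrict t)

end EuclideanSpace

open EuclideanSpace

theorem rect_eq_preimage (r : ℝ) :
    rect r = measurableEquivProd ⁻¹' (Icc 0 r ×ˢ Icc 0 (π / r)) := rfl

theorem measurableSet_rect (r : ℝ) : MeasurableSet (rect r) :=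
  measurableEquivProd.measurable (measurableSet_Icc.prod measurableSet_Icc)

theorem volume_rect {r : ℝ} (hr : 0 < r) : volume (rect r) = ENNReal.ofReal π := by
  rw [rect_eq_preimage, measurePreserving_measurableEquivProd.measure_preimage_equiv,
    Measure.volume_eq_prod, Measure.prod_prod, Real.volume_Icc, Real.volume_Icc,
    sub_zero, sub_zero, ← ENNReal.ofReal_mul hr.le]
  congr 1
  field_simp

theorem measureReal_rect {r : ℝ} (hr : 0 < r) : volume.real (rect r) = π := by
  rw [measureReal_def, volume_rect hr, ENNReal.toReal_ofReal pi_pos.le]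

theorem volume_rect_ne_top {r : ℝ} (hr : 0 < r) : volume (rect r) ≠ ⊤ := by
  simp [volume_rect hr]

theorem setIntegral_rect_comp_apply_zero {r : ℝ} (hr : 0 < r) (φ : ℝ → ℝ) :
    ∫ y in rect r, φ (y 0) = π / r * ∫ t in (0)..r, φ t := by
  rw [rect_eq_preimage, setIntegral_preimage_prod_comp_apply_zero, Real.volume_real_Icc_of_le,
    sub_zero, integral_Icc_eq_integral_Ioc, intervalIntegral.integral_of_le hr.le]
  positivity

theorem integrableOn_rect_comp_apply_zero {r : ℝ} (hr : 0 ≤ r) {φ : ℝ → ℝ}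
    (hφ : IntervalIntegrable φ volume 0 r) : IntegrableOn (fun y => φ (y 0)) (rect r) := by
  rw [rect_eq_preimage]
  refine integrableOn_preimage_prod_comp_apply_zero ?_ (by simp)
  exact (integrableOn_Icc_iff_integrableOn_Ioc).2
    ((intervalIntegrable_iff_integrableOn_Ioc_of_le hr).1 hφ)

theorem dist_le_of_mem_rect {r : ℝ} {x y : EuclideanSpace ℝ (Fin 2)} (hx : x ∈ rect r)
    (hy : y ∈ rect r) : dist x y ≤ r + π / r := by
  have h0 := Real.dist_le_of_mem_Icc hx.1 hy.1
  have h1 := Real.dist_le_of_mem_Icc hx.2 hy.2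
  have h0' := dist_nonneg (x := x 0) (y := y 0)
  have h1' := dist_nonneg (x := x 1) (y := y 1)
  rw [sub_zero] at h0 h1
  rw [EuclideanSpace.dist_eq, Fin.sum_univ_two, sqrt_le_left (by linarith)]
  nlinarith

theorem ae_restrict_rect_log_one_div_dist_mem_Icc {r : ℝ} {x : EuclideanSpace ℝ (Fin 2)}
    (hx : x ∈ rect r) : ∀ᵐ y ∂volume.restrict (rect r),
      log (1 / dist x y) ∈ Icc (-log (r + π / r)) (-log |x 0 - y 0|) := by
  filter_upwards [ae_restrict_mem (measurableSet_rect r),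
    ae_restrict_of_ae (ae_apply_ne 0 (x 0))] with y hy hne
  refine ⟨?_, log_one_div_dist_le_neg_log_abs_sub hne.symm⟩
  rw [one_div, log_inv, neg_le_neg_iff]
  exact log_le_log (dist_pos.2 fun h => hne (h ▸ rfl)) (dist_le_of_mem_rect hx hy)

theorem integrableOn_rect_log_one_div_dist {r : ℝ} (hr : 0 < r) {x : EuclideanSpace ℝ (Fin 2)}
    (hx : x ∈ rect r) : IntegrableOn (fun y => log (1 / dist x y)) (rect r) := by
  have hbounds := ae_restrict_rect_log_one_div_dist_mem_Icc hx
  have hmeas : Measurable fun y => log (1 / dist x y) := by fun_prop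
  exact integrable_of_le_of_le hmeas.aestronglyMeasurable (hbounds.mono fun y h => h.1)
    (hbounds.mono fun y h => h.2) (integrableOn_const (volume_rect_ne_top hr))
    (integrableOn_rect_comp_apply_zero hr.le (intervalIntegrable_log_abs_sub _ _ _).neg)

theorem setIntegral_rect_log_one_div_dist_le {r : ℝ} (hr : 0 < r) {x : EuclideanSpace ℝ (Fin 2)}
    (hx : x ∈ rect r) : ∫ y in rect r, log (1 / dist x y) ≤ π * (1 - log (r / 2)) :=
  calc ∫ y in rect r, log (1 / dist x y) ≤ ∫ y in rect r, -log |x 0 - y 0| :=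
        integral_mono_ae (integrableOn_rect_log_one_div_dist hr hx)
          (integrableOn_rect_comp_apply_zero hr.le (intervalIntegrable_log_abs_sub _ _ _).neg)
          ((ae_restrict_rect_log_one_div_dist_mem_Icc hx).mono fun y h => h.2)
    _ = π / r * ∫ t in (0)..r, -log |x 0 - t| :=
        setIntegral_rect_comp_apply_zero hr fun t => -log |x 0 - t|
    _ ≤ π / r * (r * (1 - log (r / 2))) := by gcongr; exact integral_neg_log_abs_sub_le hx.1
    _ = π * (1 - log (r / 2)) := by field_simp

theorem neg_mul_log_le_setIntegral_rect_log_one_div_dist {r : ℝ} (hr : 0 < r)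
    {x : EuclideanSpace ℝ (Fin 2)} (hx : x ∈ rect r) :
    -(π * log (r + π / r)) ≤ ∫ y in rect r, log (1 / dist x y) :=
  calc -(π * log (r + π / r)) = ∫ _ in rect r, -log (r + π / r) := by
        rw [setIntegral_const, measureReal_rect hr, smul_eq_mul, mul_neg]
    _ ≤ _ := integral_mono_ae (integrableOn_const (volume_rect_ne_top hr))
        (integrableOn_rect_log_one_div_dist hr hx)
        ((ae_restrict_rect_log_one_div_dist_mem_Icc hx).mono fun y h => h.1)

theorem rect_interaction_upper_bound (r : ℝ) (hr : 0 < r) :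
    ∫ x in rect r, ∫ y in rect r, Real.log (1 / dist x y)
      ≤ Real.pi ^ 2 * (1 - Real.log (r / 2)) := by
  have hmeas : AEStronglyMeasurable (fun x => ∫ y in rect r, log (1 / dist x y))
      (volume.restrict (rect r)) :=
    (show StronglyMeasurable fun p : EuclideanSpace ℝ (Fin 2) × EuclideanSpace ℝ (Fin 2) =>
      log (1 / dist p.1 p.2) by fun_prop).integral_prod_right'.aestronglyMeasurable
  calc ∫ x in rect r, ∫ y in rect r, log (1 / dist x y)
      ≤ volume.real (rect r) * (π * (1 - log (r / 2))) :=
        setIntegral_le_of_forall_mem_Icc (measurableSet_rect r) (volume_rect_ne_top hr) hmeas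
          fun x hx => ⟨neg_mul_log_le_setIntegral_rect_log_one_div_dist hr hx,
            setIntegral_rect_log_one_div_dist_le hr hx⟩
    _ = π ^ 2 * (1 - log (r / 2)) := by rw [measureReal_rect hr]; ring
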